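/- arXiv:1609.00794 — 2 statements merged into one kernel-verified Lean document; each statement's English description precedes it below -/
import Mathlib

section
/- The unique bounded entire solution u* of the nonautonomous logistic equation with inf_{t∈ℝ} u*(t) > 0 attracts all positive solutions: for every t₀ ∈ ℝ and every u₀ > 0, the solution u(t; t₀, u₀) of the equation with u(t₀; t₀, u₀) = u₀ is defined for all t ≥ t₀ and satisfies |u(t + t₀; t₀, u₀) − u*(t + t₀)| → 0 as t → ∞. -/
/-!
The substitution `v = 1 / u` turns the logistic equation into the linear equation
`v' = b - a v`. Hence the difference `d` of the reciprocals of two positive solutions solves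
`d' = -a d`, so `d(t) = d(t₀) exp (-∫_{t₀}^t a)` decays like `exp (-(inf a) (t - t₀))`; as
`1 / u*` is bounded below by `1 / sup u*`, this forces `u - u* → 0`. A solution stays positive
because `u(t) = u(t₀) exp ∫_{t₀}^t (a - b u)`, and a solution for every positive initial value is
obtained by solving the linear equation for `1 / u` explicitly.
-/

open Filter Set Topology Real

theorem iInf_le_of_iInf_pos {ι : Type*} {f : ι → ℝ} (h : 0 < ⨅ i, f i) (i : ι) :
    ⨅ j, f j ≤ f i := by
  refine ciInf_le ?_ i
  by_contra hf
  rw [Real.iInf_of_not_bddBelow hf] at h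
  exact h.false

theorem eq_mul_exp_integral_of_hasDerivWithinAt {x c : ℝ → ℝ} {t₀ T : ℝ} (hT : t₀ ≤ T)
    (hc : ContinuousOn c (Icc t₀ T))
    (hx : ∀ t ∈ Icc t₀ T, HasDerivWithinAt x (x t * c t) (Icc t₀ T) t) :
    x T = x t₀ * exp (∫ s in t₀..T, c s) := by
  set C : ℝ → ℝ := fun t => ∫ s in t₀..t, c s
  have hC : ∀ t ∈ Icc t₀ T, HasDerivWithinAt C (c t) (Icc t₀ T) t := fun t ht => by
    have : Fact (t ∈ Icc t₀ T) := ⟨ht⟩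
    exact intervalIntegral.integral_hasDerivWithinAt_right
      ((hc.mono (Icc_subset_Icc_right ht.2)).intervalIntegrable_of_Icc ht.1)
      (hc.stronglyMeasurableAtFilter_nhdsWithin measurableSet_Icc t) (hc t ht)
  have hconst : ∀ t ∈ Icc t₀ T,
      HasDerivWithinAt (fun s => x s * exp (-C s)) 0 (Icc t₀ T) t := fun t ht => by
    refine ((hx t ht).mul ((hC t ht).neg.exp)).congr_deriv ?_
    ring
  have := (convex_Icc t₀ T).norm_image_sub_le_of_norm_hasDerivWithin_le hconst
    (fun _ _ => norm_zero.le) (left_mem_Icc.2 hT) (right_mem_Icc.2 hT)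
  rw [zero_mul, norm_le_zero_iff, sub_eq_zero] at this
  simp only [C, intervalIntegral.integral_same, neg_zero, exp_zero, mul_one] at this
  rw [← this, mul_assoc, ← exp_add, neg_add_cancel, exp_zero, mul_one]

theorem HasDerivWithinAt.inv_of_logistic {w : ℝ → ℝ} {s : Set ℝ} {t p q : ℝ}
    (hw : HasDerivWithinAt w (w t * (p - q * w t)) s t) (hw₀ : w t ≠ 0) :
    HasDerivWithinAt (fun x => (w x)⁻¹) (q - p * (w t)⁻¹) s t := by
  refine (hw.inv hw₀).congr_deriv ?_
  field_simp
  ring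

theorem HasDerivAt.inv_of_linear {v : ℝ → ℝ} {t p q : ℝ}
    (hv : HasDerivAt v (q - p * v t) t) (hv₀ : v t ≠ 0) :
    HasDerivAt (fun x => (v x)⁻¹) ((v t)⁻¹ * (p - q * (v t)⁻¹)) t := by
  refine (hv.inv hv₀).congr_deriv ?_
  field_simp
  ring

section Logistic

variable {a b w u : ℝ → ℝ} {t₀ : ℝ}

theorem exists_logistic_solution (ha : Continuous a) (hb : Continuous b) (hb₀ : ∀ t, 0 ≤ b t)
    {u₀ : ℝ} (hu₀ : 0 < u₀) :
    ∃ w : ℝ → ℝ, w t₀ = u₀ ∧ ∀ t, t₀ ≤ t → HasDerivAt w (w t * (a t - b t * w t)) t := by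
  set A : ℝ → ℝ := fun t => ∫ s in t₀..t, a s
  have hA : ∀ t, HasDerivAt A (a t) t := fun t =>
    (ha.integral_hasStrictDerivAt t₀ t).hasDerivAt
  have hbA : Continuous fun s => b s * exp (A s) :=
    hb.mul (continuous_exp.comp (continuous_iff_continuousAt.2 fun t => (hA t).continuousAt))
  set P : ℝ → ℝ := fun t => u₀⁻¹ + ∫ s in t₀..t, b s * exp (A s)
  set v : ℝ → ℝ := fun t => exp (-A t) * P t
  have hv : ∀ t, HasDerivAt v (b t - a t * v t) t := fun t => by
    refine (((hA t).neg.exp).mul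
      ((hbA.integral_hasStrictDerivAt t₀ t).hasDerivAt.const_add u₀⁻¹)).congr_deriv ?_
    have : exp (-A t) * exp (A t) = 1 := by rw [← exp_add, neg_add_cancel, exp_zero]
    linear_combination b t * this
  have hv_pos : ∀ t, t₀ ≤ t → 0 < v t := fun t ht => by
    have : 0 ≤ ∫ s in t₀..t, b s * exp (A s) :=
      intervalIntegral.integral_nonneg ht fun s _ => mul_nonneg (hb₀ s) (exp_pos _).le
    have : 0 < u₀⁻¹ := inv_pos.2 hu₀
    exact mul_pos (exp_pos _) (by simp only [P]; linarith)
  refine ⟨fun t => (v t)⁻¹, by simp [v, P, A], fun t ht => ?_⟩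
  exact (hv t).inv_of_linear (hv_pos t ht).ne'

theorem logistic_solution_pos (ha : ContinuousOn a (Ici t₀)) (hb : ContinuousOn b (Ici t₀))
    (hw : ∀ t ∈ Ici t₀, HasDerivWithinAt w (w t * (a t - b t * w t)) (Ici t₀) t)
    (hw₀ : 0 < w t₀) {T : ℝ} (hT : t₀ ≤ T) : 0 < w T := by
  have hwc : ContinuousOn w (Ici t₀) := fun t ht => (hw t ht).continuousWithinAt
  rw [eq_mul_exp_integral_of_hasDerivWithinAt hT
    ((ha.sub (hb.mul hwc)).mono Icc_subset_Ici_self)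
    fun t ht => (hw t ht.1).mono Icc_subset_Ici_self]
  positivity

theorem inv_sub_inv_eq_mul_exp_of_logistic (ha : Continuous a)
    (hw : ∀ t ∈ Ici t₀, HasDerivWithinAt w (w t * (a t - b t * w t)) (Ici t₀) t)
    (hu : ∀ t ∈ Ici t₀, HasDerivWithinAt u (u t * (a t - b t * u t)) (Ici t₀) t)
    (hw_ne : ∀ t ∈ Ici t₀, w t ≠ 0) (hu_ne : ∀ t ∈ Ici t₀, u t ≠ 0) {T : ℝ} (hT : t₀ ≤ T) :
    (w T)⁻¹ - (u T)⁻¹ = ((w t₀)⁻¹ - (u t₀)⁻¹) * exp (-∫ s in t₀..T, a s) := by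
  rw [← intervalIntegral.integral_neg]
  refine eq_mul_exp_integral_of_hasDerivWithinAt (x := fun t => (w t)⁻¹ - (u t)⁻¹) hT
    ha.neg.continuousOn fun t ht => ?_
  refine ((((hw t ht.1).inv_of_logistic (hw_ne t ht.1)).sub
    ((hu t ht.1).inv_of_logistic (hu_ne t ht.1))).mono Icc_subset_Ici_self).congr_deriv ?_
  ring

end Logistic

theorem tendsto_integral_atTop_of_const_le {a : ℝ → ℝ} (ha : MeasureTheory.LocallyIntegrable a)
    {α : ℝ} (hα : 0 < α) (haα : ∀ t, α ≤ a t) (t₀ : ℝ) :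
    Tendsto (fun t => ∫ s in t₀..t, a s) atTop atTop := by
  refine tendsto_atTop_mono' atTop ?_
    ((tendsto_atTop_add_const_right _ (-t₀) tendsto_id).const_mul_atTop hα)
  filter_upwards [eventually_ge_atTop t₀] with t ht
  simpa [← sub_eq_add_neg, mul_comm] using
    intervalIntegral.integral_mono_on ht (intervalIntegrable_const (μ := MeasureTheory.volume))
      (ha.integrableOn_isCompact isCompact_uIcc).intervalIntegrable
      fun s _ => haα s

theorem tendsto_inv_sub_inv_of_tendsto_sub {ι : Type*} {l : Filter ι} {v z : ι → ℝ} {ε : ℝ}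
    (hε : 0 < ε) (hz : ∀ i, ε ≤ z i) (h : Tendsto (fun i => v i - z i) l (𝓝 0)) :
    Tendsto (fun i => (v i)⁻¹ - (z i)⁻¹) l (𝓝 0) := by
  have hv : ∀ᶠ i in l, ε / 2 ≤ v i := by
    filter_upwards [h.eventually (Ioo_mem_nhds (neg_lt_zero.2 (half_pos hε)) (half_pos hε))]
      with i hi
    linarith [hi.1, hz i]
  have hbound : ∀ᶠ i in l, ‖(v i)⁻¹ - (z i)⁻¹‖ ≤ ‖v i - z i‖ * ((ε / 2)⁻¹ * ε⁻¹) := by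
    filter_upwards [hv] with i hvi
    have hv₀ : 0 < v i := (half_pos hε).trans_le hvi
    have hz₀ : 0 < z i := hε.trans_le (hz i)
    have : (v i)⁻¹ - (z i)⁻¹ = -(v i - z i) * ((v i)⁻¹ * (z i)⁻¹) := by
      field_simp
      ring
    have hv' : (v i)⁻¹ ≤ (ε / 2)⁻¹ := inv_anti₀ (half_pos hε) hvi
    have hz' : (z i)⁻¹ ≤ ε⁻¹ := inv_anti₀ hε (hz i)
    rw [this, norm_mul, norm_neg, Real.norm_of_nonneg (by positivity : 0 ≤ (v i)⁻¹ * (z i)⁻¹)]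
    gcongr
  exact squeeze_zero_norm' hbound (by simpa using h.norm.mul_const ((ε / 2)⁻¹ * ε⁻¹))

theorem logistic_entire_solution_attracts_positive_solutions_general
    (a b ustar : ℝ → ℝ)
    (ha_cont : Continuous a) (hb_cont : Continuous b)
    (ha_inf_pos : 0 < ⨅ t, a t) (hb_inf_pos : 0 < ⨅ t, b t)
    (hstar : (∀ t, HasDerivAt ustar (ustar t * (a t - b t * ustar t)) t) ∧
      BddAbove (Set.range ustar) ∧ 0 < ⨅ t, ustar t)
    (t₀ u₀ : ℝ) (hu₀ : 0 < u₀) :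
    (∃ w : ℝ → ℝ, w t₀ = u₀ ∧
      ∀ t ∈ Set.Ici t₀, HasDerivWithinAt w (w t * (a t - b t * w t)) (Set.Ici t₀) t) ∧
    (∀ w : ℝ → ℝ, w t₀ = u₀ →
      (∀ t ∈ Set.Ici t₀, HasDerivWithinAt w (w t * (a t - b t * w t)) (Set.Ici t₀) t) →
      Filter.Tendsto (fun t => |w (t + t₀) - ustar (t + t₀)|) Filter.atTop (nhds 0)) := by
  obtain ⟨hu, ⟨M, hM⟩, hu_inf⟩ := hstar
  have hu_pos : ∀ t, 0 < ustar t := fun t => hu_inf.trans_le (iInf_le_of_iInf_pos hu_inf t)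
  refine ⟨?_, fun w hw₀ hw => ?_⟩
  · obtain ⟨w, hw₀, hw⟩ := exists_logistic_solution ha_cont hb_cont
      (fun t => (hb_inf_pos.trans_le (iInf_le_of_iInf_pos hb_inf_pos t)).le) (t₀ := t₀) hu₀
    exact ⟨w, hw₀, fun t ht => (hw t ht).hasDerivWithinAt⟩
  have hw_pos : ∀ t ∈ Ici t₀, 0 < w t := fun t ht =>
    logistic_solution_pos ha_cont.continuousOn hb_cont.continuousOn hw (hw₀ ▸ hu₀) ht
  have hdecay : Tendsto (fun t => exp (-∫ s in t₀..t, a s)) atTop (𝓝 0) :=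
    tendsto_exp_neg_atTop_nhds_zero.comp
      (tendsto_integral_atTop_of_const_le ha_cont.locallyIntegrable ha_inf_pos
        (iInf_le_of_iInf_pos ha_inf_pos) t₀)
  have hinv : Tendsto (fun t => (w t)⁻¹ - (ustar t)⁻¹) atTop (𝓝 0) := by
    have := hdecay.const_mul ((w t₀)⁻¹ - (ustar t₀)⁻¹)
    rw [mul_zero] at this
    refine this.congr' ?_
    filter_upwards [eventually_ge_atTop t₀] with t ht
    exact (inv_sub_inv_eq_mul_exp_of_logistic ha_cont hw (fun s _ => (hu s).hasDerivWithinAt)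
      (fun s hs => (hw_pos s hs).ne') (fun s _ => (hu_pos s).ne') ht).symm
  have hM_pos : 0 < M := (hu_pos 0).trans_le (hM ⟨0, rfl⟩)
  have hdiff := tendsto_inv_sub_inv_of_tendsto_sub (inv_pos.2 hM_pos)
    (fun t => inv_anti₀ (hu_pos t) (hM ⟨t, rfl⟩)) hinv
  simp only [inv_inv] at hdiff
  rw [← abs_zero]
  exact hdiff.abs.comp (tendsto_atTop_add_const_right _ t₀ tendsto_id)

/-- The unique bounded entire solution `u*` of the nonautonomous logistic
equation with positive infimum attracts all positive solutions: for every `t₀` and `u₀ > 0`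
the solution with value `u₀` at `t₀` is defined for all `t ≥ t₀` and
`|u(t + t₀; t₀, u₀) − u*(t + t₀)| → 0` as `t → ∞`. -/
theorem logistic_entire_solution_attracts_positive_solutions
    (a b ustar : ℝ → ℝ)
    (ha_cont : Continuous a) (hb_cont : Continuous b)
    (ha_bddAbove : BddAbove (Set.range a)) (hb_bddAbove : BddAbove (Set.range b))
    (ha_inf_pos : 0 < ⨅ t, a t) (hb_inf_pos : 0 < ⨅ t, b t)
    (hstar : (∀ t, HasDerivAt ustar (ustar t * (a t - b t * ustar t)) t) ∧
      BddAbove (Set.range ustar) ∧ 0 < ⨅ t, ustar t)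
    (t₀ u₀ : ℝ) (hu₀ : 0 < u₀) :
    (∃ w : ℝ → ℝ, w t₀ = u₀ ∧
      ∀ t ∈ Set.Ici t₀, HasDerivWithinAt w (w t * (a t - b t * w t)) (Set.Ici t₀) t) ∧
    (∀ w : ℝ → ℝ, w t₀ = u₀ →
      (∀ t ∈ Set.Ici t₀, HasDerivWithinAt w (w t * (a t - b t * w t)) (Set.Ici t₀) t) →
      Filter.Tendsto (fun t => |w (t + t₀) - ustar (t + t₀)|) Filter.atTop (nhds 0)) :=
  logistic_entire_solution_attracts_positive_solutions_general a b ustar ha_cont hb_cont ha_inf_pos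
    hb_inf_pos hstar t₀ u₀ hu₀
end

section
/- Let κ > 0 and let a₀, a₁, a₂ : ℝ → ℝ be continuous and bounded with inf_{t∈ℝ} a₀(t) > 0 and inf_{t∈ℝ} {a₁(t) − κ(a₂(t))₋} > 0. Then the ODE u' = u(a₀(t) − (a₁(t) + κ a₂(t))u), which governs the spatially homogeneous solutions of the parabolic-elliptic chemotaxis system on a domain of measure κ, has exactly one entire solution u* that is bounded and satisfies inf_{t∈ℝ} u*(t) > 0; moreover, if a₀, a₁, a₂ are all periodic with period T > 0, then u* is periodic with period T, and if a₀, a₁, a₂ are almost periodic, then u* is almost periodic. -/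
/-!
For `u > 0` the substitution `v = 1 / u` turns `u' = u (a₀ - b u)`, `b = a₁ + κ a₂`, into the
linear equation `v' = b - a₀ v`. Since `a₀ ≥ α > 0`, the difference of two bounded solutions of the
linear equation is a multiple of `exp (-∫₀ᵗ a₀)`, which is unbounded as `t → -∞` unless it
vanishes. So the linear equation has exactly one bounded entire solution,
`∫_{-∞}^t exp (-∫ₛᵗ a₀) b(s) ds`, which lies between `inf b / sup a₀` and `sup b / inf a₀`
(the hypothesis gives `b ≥ inf (a₁ - κ (a₂)₋) > 0`), and its reciprocal is `u*`.
Uniqueness also yields periodicity. Applied to `v(· + τ) - v`, which solves the linear equation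
with a forcing term of size `O(η)` when `τ` is a common `η`-almost period of `a₀` and `b`, the
a priori bound `sup |w| ≤ sup |forcing| / inf a₀` for bounded solutions `w` yields almost
periodicity.
-/

/-- A continuous function `f : ℝ → ℝ` is (Bohr) almost periodic: for every `ε > 0` the set of
`ε`-periods of `f` is relatively dense in `ℝ`. -/
def BohrAlmostPeriodic (f : ℝ → ℝ) : Prop :=
  Continuous f ∧
    ∀ ε > 0, ∃ l > 0, ∀ s : ℝ, ∃ τ ∈ Set.Icc s (s + l), ∀ t : ℝ, |f (t + τ) - f t| < ε

open Real Set MeasureTheory Filter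

section AlmostPeriodic

variable {f g : ℝ → ℝ}

theorem BohrAlmostPeriodic.uniformContinuous (hf : BohrAlmostPeriodic f) :
    UniformContinuous f := by
  rw [Metric.uniformContinuous_iff]
  intro ε hε
  obtain ⟨l, -, hper⟩ := hf.2 (ε / 3) (by positivity)
  obtain ⟨δ, hδ, hδf⟩ := Metric.uniformContinuousOn_iff.1
    ((isCompact_Icc : IsCompact (Icc (-1 : ℝ) (l + 1))).uniformContinuousOn_of_continuous
      hf.1.continuousOn)
    (ε / 3) (by positivity)
  refine ⟨min δ 1, by positivity, fun {x y} hxy => ?_⟩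
  -- an `ε/3`-period moves `x` and `y` into the compact window `[-1, l + 1]`
  obtain ⟨τ, ⟨hτ₁, hτ₂⟩, hτ⟩ := hper (-y)
  rw [Real.dist_eq] at hxy ⊢
  have hxy₁ := abs_lt.1 (hxy.trans_le (min_le_right _ _))
  have hmid := abs_lt.1 <| hδf (x + τ) ⟨by linarith, by linarith⟩ (y + τ)
    ⟨by linarith, by linarith⟩ (by simpa [Real.dist_eq] using hxy.trans_le (min_le_left _ _))
  have hx := abs_lt.1 (hτ x)
  have hy := abs_lt.1 (hτ y)
  exact abs_lt.2 ⟨by linarith, by linarith⟩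

theorem BohrAlmostPeriodic.exists_finite_translation_net (hf : BohrAlmostPeriodic f) {ε : ℝ}
    (hε : 0 < ε) : ∃ R : Set ℝ, R.Finite ∧ ∀ s, ∃ r ∈ R, ∀ t, |f (t + s) - f (t + r)| < ε := by
  obtain ⟨δ, hδ, hδf⟩ := Metric.uniformContinuous_iff.1 hf.uniformContinuous (ε / 2)
    (by positivity)
  obtain ⟨l, -, hper⟩ := hf.2 (ε / 2) (by positivity)
  obtain ⟨R, -, hRfin, hR⟩ := Metric.finite_approx_of_totallyBounded
    (isCompact_Icc (a := 0) (b := l)).totallyBounded δ hδ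
  refine ⟨R, hRfin, fun s => ?_⟩
  obtain ⟨τ, ⟨hτ₁, hτ₂⟩, hτ⟩ := hper (-s)
  obtain ⟨r, hr, hsr⟩ := mem_iUnion₂.1 (hR ⟨(by linarith : 0 ≤ s + τ), by linarith⟩)
  refine ⟨r, hr, fun t => ?_⟩
  have h₁ := abs_lt.1 (hτ (t + s))
  have h₂ := hδf (show dist (t + (s + τ)) (t + r) < δ by rwa [dist_add_left])
  rw [Real.dist_eq, ← add_assoc] at h₂
  replace h₂ := abs_lt.1 h₂
  exact abs_lt.2 ⟨by linarith, by linarith⟩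

/-- Two shifts with the same addresses in finite translation nets of `f` and `g` differ by a
common almost period; as there are finitely many addresses, representatives can be chosen in a
bounded set. -/
theorem BohrAlmostPeriodic.exists_common_almost_periods (hf : BohrAlmostPeriodic f)
    (hg : BohrAlmostPeriodic g) {ε : ℝ} (hε : 0 < ε) :
    ∃ l > 0, ∀ s, ∃ τ ∈ Icc s (s + l), ∀ t, |f (t + τ) - f t| < ε ∧ |g (t + τ) - g t| < ε := by
  obtain ⟨R, hRfin, hR⟩ := hf.exists_finite_translation_net (half_pos hε)
  obtain ⟨Q, hQfin, hQ⟩ := hg.exists_finite_translation_net (half_pos hε)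
  choose r hrR hr using hR
  choose q hqQ hq using hQ
  set address : ℝ → ℝ × ℝ := fun s => (r s, q s)
  have : Finite (range address) := ((hRfin.prod hQfin).subset
    (range_subset_iff.2 fun s => mk_mem_prod (hrR s) (hqQ s))).to_subtype
  obtain ⟨L, hL⟩ := (finite_range fun p => |rangeSplitting address p|).bddAbove
  set L' := max L 1
  refine ⟨2 * L', by positivity, fun s => ?_⟩
  set σ := s + L'
  set s₀ := rangeSplitting address ⟨address σ, mem_range_self σ⟩
  have hs₀ : |s₀| ≤ L' := (hL (mem_range_self _)).trans (le_max_left _ _)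
  obtain ⟨hrs₀, hqs₀⟩ : r s₀ = r σ ∧ q s₀ = q σ :=
    Prod.ext_iff.1 (apply_rangeSplitting address ⟨address σ, mem_range_self σ⟩)
  have hs₀' := abs_le.1 hs₀
  have hshift : ∀ t, |f (t + σ) - f (t + s₀)| < ε ∧ |g (t + σ) - g (t + s₀)| < ε := fun t => by
    have hf₁ := abs_lt.1 (hr σ t)
    have hf₂ := abs_lt.1 (hr s₀ t)
    have hg₁ := abs_lt.1 (hq σ t)
    have hg₂ := abs_lt.1 (hq s₀ t)
    rw [hrs₀] at hf₂
    rw [hqs₀] at hg₂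
    exact ⟨abs_lt.2 ⟨by linarith, by linarith⟩, abs_lt.2 ⟨by linarith, by linarith⟩⟩
  refine ⟨σ - s₀, ⟨by linarith, by linarith⟩, fun t => ?_⟩
  simpa only [sub_add_cancel, sub_add_eq_add_sub, add_sub_assoc] using hshift (t - s₀)

theorem BohrAlmostPeriodic.add (hf : BohrAlmostPeriodic f) (hg : BohrAlmostPeriodic g) :
    BohrAlmostPeriodic fun t => f t + g t := by
  refine ⟨hf.1.add hg.1, fun ε hε => ?_⟩
  obtain ⟨l, hl, hper⟩ := hf.exists_common_almost_periods hg (half_pos hε)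
  refine ⟨l, hl, fun s => ?_⟩
  obtain ⟨τ, hτ, h⟩ := hper s
  refine ⟨τ, hτ, fun t => ?_⟩
  have hf' := abs_lt.1 (h t).1
  have hg' := abs_lt.1 (h t).2
  exact abs_lt.2 ⟨by linarith, by linarith⟩

theorem BohrAlmostPeriodic.const_mul (hf : BohrAlmostPeriodic f) (c : ℝ) :
    BohrAlmostPeriodic fun t => c * f t := by
  refine ⟨continuous_const.mul hf.1, fun ε hε => ?_⟩
  obtain ⟨l, hl, hper⟩ := hf.2 (ε / (|c| + 1)) (by positivity)
  refine ⟨l, hl, fun s => ?_⟩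
  obtain ⟨τ, hτ, h⟩ := hper s
  refine ⟨τ, hτ, fun t => ?_⟩
  rw [← mul_sub, abs_mul]
  calc |c| * |f (t + τ) - f t| ≤ |c| * (ε / (|c| + 1)) := by gcongr; exact (h t).le
    _ < ε := by rw [mul_div_assoc', div_lt_iff₀ (by positivity)]; linarith

theorem BohrAlmostPeriodic.inv (hf : BohrAlmostPeriodic f) {c : ℝ} (hc : 0 < c)
    (hfc : ∀ t, c ≤ f t) : BohrAlmostPeriodic fun t => (f t)⁻¹ := by
  refine ⟨hf.1.inv₀ fun t => (hc.trans_le (hfc t)).ne', fun ε hε => ?_⟩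
  obtain ⟨l, hl, hper⟩ := hf.2 (ε * c ^ 2) (by positivity)
  refine ⟨l, hl, fun s => ?_⟩
  obtain ⟨τ, hτ, h⟩ := hper s
  refine ⟨τ, hτ, fun t => ?_⟩
  have h₁ := hc.trans_le (hfc (t + τ))
  have h₂ := hc.trans_le (hfc t)
  rw [inv_sub_inv h₁.ne' h₂.ne', abs_div, abs_of_pos (mul_pos h₁ h₂),
    div_lt_iff₀ (mul_pos h₁ h₂), abs_sub_comm]
  calc |f (t + τ) - f t| < ε * c ^ 2 := h t
    _ ≤ ε * (f (t + τ) * f t) := by gcongr; nlinarith [hfc t, hfc (t + τ)]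

end AlmostPeriodic

section Linear

variable {a b v w : ℝ → ℝ} {α β m M s t : ℝ}

theorem mul_sub_le_integral_of_le (ha : Continuous a) (hαa : ∀ t, α ≤ a t) (hst : s ≤ t) :
    α * (t - s) ≤ ∫ x in s..t, a x := by
  simpa [mul_comm] using intervalIntegral.integral_mono_on (μ := volume) hst
    intervalIntegrable_const (ha.intervalIntegrable s t) fun x _ => hαa x

theorem integral_le_mul_sub_of_le (ha : Continuous a) (haβ : ∀ t, a t ≤ β) (hst : s ≤ t) :
    ∫ x in s..t, a x ≤ β * (t - s) := by
  simpa [mul_comm] using intervalIntegral.integral_mono_on (μ := volume) hst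
    (ha.intervalIntegrable s t) intervalIntegrable_const fun x _ => haβ x

theorem integrableOn_Iic_exp_mul_sub (hα : 0 < α) (t : ℝ) :
    IntegrableOn (fun s => exp (α * (s - t))) (Iic t) := by
  simp_rw [mul_sub, exp_sub]
  exact (integrableOn_exp_mul_Iic hα t).div_const _

theorem integral_Iic_exp_mul_sub (hα : 0 < α) (t : ℝ) :
    ∫ s in Iic t, exp (α * (s - t)) = α⁻¹ := by
  simp_rw [mul_sub, exp_sub, integral_div, integral_exp_mul_Iic hα]
  field_simp

noncomputable def linearEntireSolution (a b : ℝ → ℝ) (t : ℝ) : ℝ :=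
  ∫ s in Iic t, exp (-∫ x in s..t, a x) * b s

theorem integral_interval_eq_sub (ha : Continuous a) (s t : ℝ) :
    ∫ x in s..t, a x = (∫ x in (0 : ℝ)..t, a x) - ∫ x in (0 : ℝ)..s, a x :=
  (intervalIntegral.integral_interval_sub_left (ha.intervalIntegrable _ _)
    (ha.intervalIntegrable _ _)).symm

theorem continuous_integral_interval_left (ha : Continuous a) (t : ℝ) :
    Continuous fun s => ∫ x in s..t, a x := by
  rw [funext (integral_interval_eq_sub ha · t)]
  exact continuous_const.sub
    (intervalIntegral.continuous_primitive (fun _ _ => ha.intervalIntegrable _ _) 0)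

theorem abs_exp_neg_integral_mul_le (ha : Continuous a) (hαa : ∀ t, α ≤ a t)
    (hbM : ∀ t, |b t| ≤ M) (hst : s ≤ t) :
    |exp (-∫ x in s..t, a x) * b s| ≤ M * exp (α * (s - t)) := by
  rw [abs_mul, abs_exp, mul_comm]
  have := mul_sub_le_integral_of_le ha hαa hst
  exact mul_le_mul (hbM s) (exp_le_exp.2 (by linarith)) (exp_pos _).le
    ((abs_nonneg _).trans (hbM s))

theorem integrableOn_linearEntireSolution_integrand (ha : Continuous a) (hα : 0 < α)
    (hαa : ∀ t, α ≤ a t) (hb : Continuous b) (hbM : ∀ t, |b t| ≤ M) (t : ℝ) :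
    IntegrableOn (fun s => exp (-∫ x in s..t, a x) * b s) (Iic t) := by
  refine ((integrableOn_Iic_exp_mul_sub hα t).const_mul M).mono' ?_ ?_
  · exact ((continuous_integral_interval_left ha t).neg.rexp.mul hb).aestronglyMeasurable
  · exact (ae_restrict_iff' measurableSet_Iic).2 (ae_of_all _ fun s hs =>
      abs_exp_neg_integral_mul_le ha hαa hbM hs)

theorem abs_linearEntireSolution_le (ha : Continuous a) (hα : 0 < α) (hαa : ∀ t, α ≤ a t)
    (hbM : ∀ t, |b t| ≤ M) (t : ℝ) :
    |linearEntireSolution a b t| ≤ M / α := by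
  calc |linearEntireSolution a b t|
      ≤ ∫ s in Iic t, M * exp (α * (s - t)) :=
        (Real.norm_eq_abs _).symm.trans_le <| norm_integral_le_of_norm_le
          ((integrableOn_Iic_exp_mul_sub hα t).const_mul M)
          ((ae_restrict_iff' measurableSet_Iic).2 (ae_of_all _ fun s hs =>
            abs_exp_neg_integral_mul_le ha hαa hbM hs))
    _ = M / α := by rw [integral_const_mul, integral_Iic_exp_mul_sub hα, div_eq_mul_inv]

theorem div_le_linearEntireSolution (ha : Continuous a) (hα : 0 < α) (hαa : ∀ t, α ≤ a t)
    (hβ : 0 < β) (haβ : ∀ t, a t ≤ β) (hb : Continuous b) (hm : 0 ≤ m) (hmb : ∀ t, m ≤ b t)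
    (hbM : ∀ t, |b t| ≤ M) (t : ℝ) :
    m / β ≤ linearEntireSolution a b t := by
  calc m / β = ∫ s in Iic t, m * exp (β * (s - t)) := by
        rw [integral_const_mul, integral_Iic_exp_mul_sub hβ, div_eq_mul_inv]
    _ ≤ linearEntireSolution a b t := by
        refine setIntegral_mono_on ((integrableOn_Iic_exp_mul_sub hβ t).const_mul m)
          (integrableOn_linearEntireSolution_integrand ha hα hαa hb hbM t) measurableSet_Iic
          fun s hs => ?_
        have := integral_le_mul_sub_of_le ha haβ (mem_Iic.1 hs)
        rw [mul_comm]
        exact mul_le_mul (exp_le_exp.2 (by linarith)) (hmb s) hm (exp_pos _).le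

theorem hasDerivAt_linearEntireSolution (ha : Continuous a) (hα : 0 < α) (hαa : ∀ t, α ≤ a t)
    (hb : Continuous b) (hbM : ∀ t, |b t| ≤ M) (t : ℝ) :
    HasDerivAt (linearEntireSolution a b) (b t - a t * linearEntireSolution a b t) t := by
  set A := fun t => ∫ x in (0 : ℝ)..t, a x
  set F := fun t => ∫ s in Iic t, exp (A s) * b s
  have hA : ∀ t, HasDerivAt A (a t) t := fun t => (ha.integral_hasStrictDerivAt 0 t).hasDerivAt
  have hV : linearEntireSolution a b = fun t => exp (-A t) * F t := by
    ext t
    rw [linearEntireSolution, ← integral_const_mul]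
    refine setIntegral_congr_fun measurableSet_Iic fun s _ => ?_
    simp only [integral_interval_eq_sub ha s t, A, neg_sub, exp_sub, exp_neg]
    ring
  have hFint : ∀ t, IntegrableOn (fun s => exp (A s) * b s) (Iic t) := fun t => by
    have := (integrableOn_linearEntireSolution_integrand ha hα hαa hb hbM t).mul_const (exp (A t))
    refine IntegrableOn.congr_fun this (fun s _ => ?_) measurableSet_Iic
    simp only [integral_interval_eq_sub ha s t, A, exp_neg, exp_sub]
    field_simp
  have hcont : Continuous fun s => exp (A s) * b s :=
    (continuous_iff_continuousAt.2 fun t => (hA t).continuousAt).rexp.mul hb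
  have hF : HasDerivAt F (exp (A t) * b t) t := by
    have hF' : F = fun t => F 0 + ∫ s in (0 : ℝ)..t, exp (A s) * b s := by
      ext t
      rw [← intervalIntegral.integral_Iic_sub_Iic (hFint 0) (hFint t)]
      ring
    rw [hF']
    exact (hcont.integral_hasStrictDerivAt 0 t).hasDerivAt.const_add _
  rw [hV]
  refine ((hA t).neg.exp.mul hF).congr_deriv ?_
  simp only [Pi.neg_apply, exp_neg]
  field_simp
  ring

theorem eq_of_hasDerivAt_linear (ha : Continuous a) (hα : 0 < α) (hαa : ∀ t, α ≤ a t)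
    (hv : ∀ t, HasDerivAt v (b t - a t * v t) t) (hw : ∀ t, HasDerivAt w (b t - a t * w t) t)
    (hbdd : ∃ K, ∀ t, |v t - w t| ≤ K) : v = w := by
  obtain ⟨K, hK⟩ := hbdd
  set A := fun t => ∫ x in (0 : ℝ)..t, a x
  have hA : ∀ t, HasDerivAt A (a t) t := fun t => (ha.integral_hasStrictDerivAt 0 t).hasDerivAt
  have hderiv : ∀ t, HasDerivAt (fun t => (v t - w t) * exp (A t)) 0 t := fun t =>
    (((hv t).sub (hw t)).mul (hA t).exp).congr_deriv (by simp only [Pi.sub_apply]; ring)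
  have hconst : ∀ t, (v t - w t) * exp (A t) = (v 0 - w 0) * exp (A 0) := fun t =>
    is_const_of_deriv_eq_zero (fun t => (hderiv t).differentiableAt) (fun t => (hderiv t).deriv) t 0
  set C := (v 0 - w 0) * exp (A 0)
  have hdiff : ∀ t, |v t - w t| = |C| * exp (-A t) := fun t => by
    rw [← hconst t, abs_mul, abs_exp, mul_assoc, ← exp_add, add_neg_cancel, exp_zero, mul_one]
  have hA_le : ∀ t ≤ 0, A t ≤ α * t := fun t ht => by
    have := mul_sub_le_integral_of_le ha hαa ht
    rw [intervalIntegral.integral_symm] at this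
    linarith
  have hC : C = 0 := by
    by_contra hC
    have hgrow : Tendsto (fun t => |C| * exp (-(α * t))) atBot atTop :=
      (tendsto_exp_atTop.comp (tendsto_neg_atBot_atTop.comp
        (tendsto_id.const_mul_atBot hα))).const_mul_atTop (abs_pos.2 hC)
    obtain ⟨t, hKt, ht⟩ := ((hgrow.eventually_gt_atTop K).and (eventually_le_atBot 0)).exists
    have : |C| * exp (-(α * t)) ≤ |v t - w t| := by
      rw [hdiff t]
      gcongr
      linarith [hA_le t ht]
    linarith [hK t]
  ext t
  simpa [hC, sub_eq_zero] using hdiff t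

theorem abs_le_of_hasDerivAt_linear (ha : Continuous a) (hα : 0 < α) (hαa : ∀ t, α ≤ a t)
    (hb : Continuous b) (hbM : ∀ t, |b t| ≤ M) (hw : ∀ t, HasDerivAt w (b t - a t * w t) t)
    (hbdd : ∃ K, ∀ t, |w t| ≤ K) (t : ℝ) : |w t| ≤ M / α := by
  obtain ⟨K, hK⟩ := hbdd
  have hV := abs_linearEntireSolution_le ha hα hαa hbM
  have : w = linearEntireSolution a b :=
    eq_of_hasDerivAt_linear ha hα hαa hw (hasDerivAt_linearEntireSolution ha hα hαa hb hbM)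
      ⟨K + M / α, fun t => (abs_sub _ _).trans (add_le_add (hK t) (hV t))⟩
  exact this ▸ hV t

theorem bohrAlmostPeriodic_of_hasDerivAt_linear (ha : BohrAlmostPeriodic a)
    (hb : BohrAlmostPeriodic b) (hα : 0 < α) (hαa : ∀ t, α ≤ a t)
    (hw : ∀ t, HasDerivAt w (b t - a t * w t) t) (hbdd : ∃ K, ∀ t, |w t| ≤ K) :
    BohrAlmostPeriodic w := by
  obtain ⟨K, hK⟩ := hbdd
  have hK₀ : 0 ≤ K := (abs_nonneg _).trans (hK 0)
  have hwc : Continuous w := continuous_iff_continuousAt.2 fun t => (hw t).continuousAt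
  refine ⟨hwc, fun ε hε => ?_⟩
  set η := ε * α / (2 * (1 + K))
  obtain ⟨l, hl, hper⟩ := ha.exists_common_almost_periods hb (show 0 < η by positivity)
  refine ⟨l, hl, fun s => ?_⟩
  obtain ⟨τ, hτ, h⟩ := hper s
  refine ⟨τ, hτ, fun t => ?_⟩
  set g := fun t => b (t + τ) - b t - (a (t + τ) - a t) * w (t + τ)
  have hg : Continuous g := by
    have := ha.1
    have := hb.1
    fun_prop
  have hgη : ∀ t, |g t| ≤ η * (1 + K) := fun t => by
    calc |g t| ≤ |b (t + τ) - b t| + |a (t + τ) - a t| * |w (t + τ)| := by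
          rw [← abs_mul]
          exact abs_sub _ _
      _ ≤ η + η * K := by gcongr; exacts [(h t).2.le, (h t).1.le, hK _]
      _ = η * (1 + K) := by ring
  have hD : ∀ t, HasDerivAt (fun t => w (t + τ) - w t) (g t - a t * (w (t + τ) - w t)) t :=
    fun t => (((hw (t + τ)).comp_add_const t τ).sub (hw t)).congr_deriv (by simp only [g]; ring)
  calc |w (t + τ) - w t| ≤ η * (1 + K) / α :=
        abs_le_of_hasDerivAt_linear ha.1 hα hαa hg hgη hD
          ⟨2 * K, fun t => (abs_sub _ _).trans (by linarith [hK (t + τ), hK t])⟩ t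
    _ = ε / 2 := by simp only [η]; field_simp
    _ < ε := half_lt_self hε

end Linear

section Logistic

variable {a b u v : ℝ → ℝ} {α β m M : ℝ}

theorem bddBelow_range_of_iInf_ne_zero {ι : Sort*} {f : ι → ℝ} (h : ⨅ i, f i ≠ 0) :
    BddBelow (range f) := by
  by_contra hf
  exact h (Real.iInf_of_not_bddBelow hf)

theorem inv_mem_Ioc_of_iInf_pos {ι : Sort*} {f : ι → ℝ} (h : 0 < ⨅ i, f i) (i : ι) :
    (f i)⁻¹ ∈ Ioc 0 (⨅ i, f i)⁻¹ := by
  have hi := ciInf_le (bddBelow_range_of_iInf_ne_zero h.ne') i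
  exact ⟨inv_pos.2 (h.trans_le hi), inv_anti₀ h hi⟩

theorem hasDerivAt_inv_of_logistic {t : ℝ} (hu : HasDerivAt u (u t * (a t - b t * u t)) t)
    (h : u t ≠ 0) : HasDerivAt (fun t => (u t)⁻¹) (b t - a t * (u t)⁻¹) t :=
  (hu.inv h).congr_deriv (by field_simp; ring)

theorem eq_of_hasDerivAt_logistic (ha : Continuous a) (hα : 0 < α) (hαa : ∀ t, α ≤ a t)
    (hu : ∀ t, HasDerivAt u (u t * (a t - b t * u t)) t)
    (hv : ∀ t, HasDerivAt v (v t * (a t - b t * v t)) t)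
    (hu₀ : 0 < ⨅ t, u t) (hv₀ : 0 < ⨅ t, v t) : u = v := by
  have hu' := inv_mem_Ioc_of_iInf_pos hu₀
  have hv' := inv_mem_Ioc_of_iInf_pos hv₀
  have hinv : (fun t => (u t)⁻¹) = fun t => (v t)⁻¹ :=
    eq_of_hasDerivAt_linear ha hα hαa
      (fun t => hasDerivAt_inv_of_logistic (hu t) (inv_pos.1 (hu' t).1).ne')
      (fun t => hasDerivAt_inv_of_logistic (hv t) (inv_pos.1 (hv' t).1).ne')
      ⟨(⨅ t, u t)⁻¹ + (⨅ t, v t)⁻¹, fun t => by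
        obtain ⟨⟨hu₁, hu₂⟩, hv₁, hv₂⟩ := And.intro (hu' t) (hv' t)
        exact abs_sub_le_iff.2 ⟨by linarith, by linarith⟩⟩
  ext t
  exact inv_injective (congrFun hinv t)

theorem existsUnique_logistic (ha : Continuous a) (hα : 0 < α) (hαa : ∀ t, α ≤ a t)
    (haβ : ∀ t, a t ≤ β) (hb : Continuous b) (hm : 0 < m) (hmb : ∀ t, m ≤ b t)
    (hbM : ∀ t, b t ≤ M) :
    ∃! u : ℝ → ℝ, (∀ t, HasDerivAt u (u t * (a t - b t * u t)) t) ∧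
      BddAbove (range u) ∧ 0 < ⨅ t, u t := by
  set V := linearEntireSolution a b
  have hβ : 0 < β := hα.trans_le ((hαa 0).trans (haβ 0))
  have hM : 0 < M := hm.trans_le ((hmb 0).trans (hbM 0))
  have hbM' : ∀ t, |b t| ≤ M := fun t =>
    abs_le.2 ⟨by linarith [hmb t], hbM t⟩
  have hV : ∀ t, HasDerivAt V (b t - a t * V t) t :=
    hasDerivAt_linearEntireSolution ha hα hαa hb hbM'
  have hVlow : ∀ t, m / β ≤ V t :=
    div_le_linearEntireSolution ha hα hαa hβ haβ hb hm.le hmb hbM'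
  have hVpos : ∀ t, 0 < V t := fun t => (div_pos hm hβ).trans_le (hVlow t)
  have hVup : ∀ t, V t ≤ M / α := fun t =>
    (le_abs_self _).trans (abs_linearEntireSolution_le ha hα hαa hbM' t)
  set W := fun t => (V t)⁻¹
  have hW : ∀ t, HasDerivAt W (W t * (a t - b t * W t)) t := fun t => by
    have := (hVpos t).ne'
    exact ((hV t).inv this).congr_deriv (by simp only [W]; field_simp; ring)
  have hW₀ : 0 < ⨅ t, W t :=
    (div_pos hα hM).trans_le <| le_ciInf fun t => by simpa using inv_anti₀ (hVpos t) (hVup t)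
  refine ⟨W, ⟨hW, ⟨β / m, ?_⟩, hW₀⟩, fun u ⟨hu, _, hu₀⟩ =>
    eq_of_hasDerivAt_logistic ha hα hαa hu hW hu₀ hW₀⟩
  rintro _ ⟨t, rfl⟩
  simpa using inv_anti₀ (div_pos hm hβ) (hVlow t)

theorem periodic_of_hasDerivAt_logistic (ha : Continuous a) (hα : 0 < α) (hαa : ∀ t, α ≤ a t)
    (hu : ∀ t, HasDerivAt u (u t * (a t - b t * u t)) t) (hu₀ : 0 < ⨅ t, u t) {T : ℝ}
    (haT : Function.Periodic a T) (hbT : Function.Periodic b T) : Function.Periodic u T := by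
  have hshift : ∀ t, HasDerivAt (fun t => u (t + T)) (u (t + T) * (a t - b t * u (t + T))) t :=
    fun t => by simpa only [haT t, hbT t] using (hu (t + T)).comp_add_const t T
  have hinf : ⨅ t, u (t + T) = ⨅ t, u t := (Equiv.addRight T).iInf_comp (g := u)
  have hshift₀ : 0 < ⨅ t, u (t + T) := hinf ▸ hu₀
  exact congrFun (eq_of_hasDerivAt_logistic ha hα hαa hshift hu hshift₀ hu₀)

theorem bohrAlmostPeriodic_of_hasDerivAt_logistic (ha : BohrAlmostPeriodic a)
    (hb : BohrAlmostPeriodic b) (hα : 0 < α) (hαa : ∀ t, α ≤ a t)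
    (hu : ∀ t, HasDerivAt u (u t * (a t - b t * u t)) t)
    (hbdd : BddAbove (range u)) (hu₀ : 0 < ⨅ t, u t) : BohrAlmostPeriodic u := by
  obtain ⟨U, hU⟩ := hbdd
  have hu' := inv_mem_Ioc_of_iInf_pos hu₀
  have hupos : ∀ t, 0 < u t := fun t => inv_pos.1 (hu' t).1
  have hv : BohrAlmostPeriodic fun t => (u t)⁻¹ :=
    bohrAlmostPeriodic_of_hasDerivAt_linear ha hb hα hαa
      (fun t => hasDerivAt_inv_of_logistic (hu t) (hupos t).ne')
      ⟨_, fun t => (abs_of_pos (hu' t).1).le.trans (hu' t).2⟩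
  simpa using hv.inv (inv_pos.2 ((hupos 0).trans_le (hU (mem_range_self 0))))
    fun t => inv_anti₀ (hupos t) (hU (mem_range_self t))

end Logistic

theorem homogeneous_logistic_unique_entire_solution_periodic_almost_periodic_general
    (κ : ℝ) (hκ : 0 < κ)
    (a₀ a₁ a₂ : ℝ → ℝ)
    (h₀c : Continuous a₀) (h₁c : Continuous a₁) (h₂c : Continuous a₂)
    (h₀B : BddAbove (Set.range a₀))
    (h₁B : BddAbove (Set.range a₁))
    (h₂B : BddAbove (Set.range a₂))
    (h₀pos : 0 < ⨅ t, a₀ t)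
    (hcond : 0 < ⨅ t, (a₁ t - κ * max (-(a₂ t)) 0)) :
    (∃! u : ℝ → ℝ,
      (∀ t, HasDerivAt u (u t * (a₀ t - (a₁ t + κ * a₂ t) * u t)) t) ∧
      BddAbove (Set.range u) ∧ 0 < ⨅ t, u t) ∧
    (∀ u : ℝ → ℝ,
      ((∀ t, HasDerivAt u (u t * (a₀ t - (a₁ t + κ * a₂ t) * u t)) t) ∧
        BddAbove (Set.range u) ∧ 0 < ⨅ t, u t) →
      (∀ T : ℝ, 0 < T →
        ((∀ t, a₀ (t + T) = a₀ t) ∧ (∀ t, a₁ (t + T) = a₁ t) ∧ (∀ t, a₂ (t + T) = a₂ t)) →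
        ∀ t, u (t + T) = u t) ∧
      ((BohrAlmostPeriodic a₀ ∧ BohrAlmostPeriodic a₁ ∧ BohrAlmostPeriodic a₂) →
        BohrAlmostPeriodic u)) := by
  have hαa : ∀ t, (⨅ t, a₀ t) ≤ a₀ t := ciInf_le (bddBelow_range_of_iInf_ne_zero h₀pos.ne')
  obtain ⟨β, hβ⟩ := h₀B
  obtain ⟨C₁, hC₁⟩ := h₁B
  obtain ⟨C₂, hC₂⟩ := h₂B
  -- `x ≥ -(x)₋` and `κ > 0` give `a₁ + κ a₂ ≥ a₁ - κ (a₂)₋`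
  have hmb : ∀ t, (⨅ t, (a₁ t - κ * max (-(a₂ t)) 0)) ≤ a₁ t + κ * a₂ t := fun t => by
    have := ciInf_le (bddBelow_range_of_iInf_ne_zero hcond.ne') t
    nlinarith [le_max_left (-(a₂ t)) 0]
  have hbM : ∀ t, a₁ t + κ * a₂ t ≤ C₁ + κ * C₂ := fun t =>
    add_le_add (hC₁ (mem_range_self t)) (by gcongr; exact hC₂ (mem_range_self t))
  refine ⟨existsUnique_logistic h₀c h₀pos hαa (fun t => hβ (mem_range_self t))
    (by fun_prop) hcond hmb hbM, fun u ⟨hu, hbdd, hu₀⟩ => ⟨?_, ?_⟩⟩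
  · rintro T - ⟨hT₀, hT₁, hT₂⟩
    exact periodic_of_hasDerivAt_logistic h₀c h₀pos hαa hu hu₀ hT₀ fun t => by simp only [hT₁, hT₂]
  · rintro ⟨hap₀, hap₁, hap₂⟩
    exact bohrAlmostPeriodic_of_hasDerivAt_logistic hap₀ (hap₁.add (hap₂.const_mul κ)) h₀pos hαa
      hu hbdd hu₀

/-- for `κ > 0` and continuous bounded `a₀, a₁, a₂` with `inf a₀ > 0` and
`inf_t {a₁(t) − κ(a₂(t))₋} > 0`, the ODE `u' = u(a₀(t) − (a₁(t) + κ a₂(t))u)` has exactly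
one entire solution `u*` that is bounded and has positive infimum; moreover `u*` is
`T`-periodic whenever `a₀, a₁, a₂` all are, and `u*` is almost periodic whenever `a₀, a₁, a₂`
all are. -/
theorem homogeneous_logistic_unique_entire_solution_periodic_almost_periodic
    (κ : ℝ) (hκ : 0 < κ)
    (a₀ a₁ a₂ : ℝ → ℝ)
    (h₀c : Continuous a₀) (h₁c : Continuous a₁) (h₂c : Continuous a₂)
    (h₀B : BddAbove (Set.range a₀)) (h₀b : BddBelow (Set.range a₀))
    (h₁B : BddAbove (Set.range a₁)) (h₁b : BddBelow (Set.range a₁))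
    (h₂B : BddAbove (Set.range a₂)) (h₂b : BddBelow (Set.range a₂))
    (h₀pos : 0 < ⨅ t, a₀ t)
    (hcond : 0 < ⨅ t, (a₁ t - κ * max (-(a₂ t)) 0)) :
    (∃! u : ℝ → ℝ,
      (∀ t, HasDerivAt u (u t * (a₀ t - (a₁ t + κ * a₂ t) * u t)) t) ∧
      BddAbove (Set.range u) ∧ 0 < ⨅ t, u t) ∧
    (∀ u : ℝ → ℝ,
      ((∀ t, HasDerivAt u (u t * (a₀ t - (a₁ t + κ * a₂ t) * u t)) t) ∧
        BddAbove (Set.range u) ∧ 0 < ⨅ t, u t) →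
      (∀ T : ℝ, 0 < T →
        ((∀ t, a₀ (t + T) = a₀ t) ∧ (∀ t, a₁ (t + T) = a₁ t) ∧ (∀ t, a₂ (t + T) = a₂ t)) →
        ∀ t, u (t + T) = u t) ∧
      ((BohrAlmostPeriodic a₀ ∧ BohrAlmostPeriodic a₁ ∧ BohrAlmostPeriodic a₂) →
        BohrAlmostPeriodic u)) :=
  homogeneous_logistic_unique_entire_solution_periodic_almost_periodic_general κ hκ a₀ a₁ a₂ h₀c h₁c
    h₂c h₀B h₁B h₂B h₀pos hcond
end
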